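/- Uniform convergence on compact sets: Suppose the rate-function family satisfies the growth conditions (G1) and (G2), I_θ(0) = 0 for all θ ∈ Θ, and J : Θ → ℝ is uniformly continuous on bounded subsets of Θ. Fix r > 0 and δ > 0. Then J̄^δ_{T,r} → J and J̲^δ_{T,r} → J uniformly on compact subsets of Θ: for every compact Θ0 ⊆ Θ, lim_{T→∞} sup_{θ' ∈ Θ0} |J̄^δ_{T,r}(θ') − J(θ')| = 0 and lim_{T→∞} sup_{θ' ∈ Θ0} |J̲^δ_{T,r}(θ') − J(θ')| = 0. -/

import Mathlib

set_option autoImplicit false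

open Filter Topology Metric Set MeasureTheory

noncomputable section

variable {E : Type*} [NormedAddCommGroup E] [NormedSpace ℝ E]

/-- The sublevel set `S_{θ,r} = {ϑ ∈ E : I_θ(ϑ) ≤ r}` of the rate function. -/
def sublevelSet (I : E → E → ENNReal) (θ : E) (r : ℝ) : Set E :=
  {ϑ : E | I θ ϑ ≤ ENNReal.ofReal r}

/-- The open `δ`-fattening `S^δ_{θ,r}` of the sublevel set, where `S^0_{θ,r} = S_{θ,r}`;
for `δ > 0` it is the set of points at distance `< δ` from `S_{θ,r}`, i.e. the union of
open balls of radius `δ` around points of `S_{θ,r}`. -/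
def fatSublevel (I : E → E → ENNReal) (θ : E) (r δ : ℝ) : Set E :=
  if δ = 0 then sublevelSet I θ r
  else ⋃ ϑ ∈ sublevelSet I θ r, Metric.ball ϑ δ

/-- Growth condition (G1): for sequences `θ_n ∈ Θ` with `sup_n ‖θ_n‖ < ∞` and
`‖ϑ_n‖ → ∞`, `I_{θ_n}(ϑ_n) → ∞`. -/
def GrowthG1 (Θ : Set E) (I : E → E → ENNReal) : Prop :=
  ∀ θs ϑs : ℕ → E, (∀ n, θs n ∈ Θ) → (∃ C : ℝ, ∀ n, ‖θs n‖ ≤ C) →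
    Tendsto (fun n => ‖ϑs n‖) atTop atTop →
    Tendsto (fun n => I (θs n) (ϑs n)) atTop (nhds ⊤)

/-- Growth condition (G2): for sequences `θ_n ∈ Θ` with `‖θ_n‖ → ∞` and
`‖ϑ_n‖/‖θ_n‖ → ∞`, `limsup_n I_{θ_n}(ϑ_n) = ∞`. -/
def GrowthG2 (Θ : Set E) (I : E → E → ENNReal) : Prop :=
  ∀ θs ϑs : ℕ → E, (∀ n, θs n ∈ Θ) →
    Tendsto (fun n => ‖θs n‖) atTop atTop →
    Tendsto (fun n => ‖ϑs n‖ / ‖θs n‖) atTop atTop →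
    Filter.limsup (fun n => I (θs n) (ϑs n)) atTop = ⊤

/-- The upper confidence bound `J̄^δ_{T,r}(θ') = sup {J(θ) : θ ∈ Θ, a_T (θ' - θ) ∈ S^δ_{θ,r}}`. -/
def upperCB (Θ : Set E) (I : E → E → ENNReal) (J : E → ℝ) (r δ : ℝ) (a : ℝ → ℝ)
    (T : ℝ) (θ' : E) : ℝ :=
  sSup (J '' {θ : E | θ ∈ Θ ∧ a T • (θ' - θ) ∈ fatSublevel I θ r δ})

/-- The lower confidence bound `J̲^δ_{T,r}(θ') = inf {J(θ) : θ ∈ Θ, a_T (θ' - θ) ∈ S^δ_{θ,r}}`. -/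
def lowerCB (Θ : Set E) (I : E → E → ENNReal) (J : E → ℝ) (r δ : ℝ) (a : ℝ → ℝ)
    (T : ℝ) (θ' : E) : ℝ :=
  sInf (J '' {θ : E | θ ∈ Θ ∧ a T • (θ' - θ) ∈ fatSublevel I θ r δ})

/-! The growth conditions bound every sublevel set linearly, `‖ϑ‖ ≤ K (‖θ‖ + 1)` whenever
`I_θ(ϑ) ≤ r`, with `K` independent of `θ ∈ Θ`. Hence a parameter `θ` with
`a_T (θ' - θ) ∈ S^δ_{θ,r}` satisfies `(a_T - K) ‖θ' - θ‖ < K (‖θ'‖ + 1) + δ`, so the confidence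
region of `θ'` shrinks to `θ'` at rate `1 / a_T`, uniformly over bounded sets of `θ'`. Since
`I_{θ'}(0) = 0`, the region contains `θ'` itself, so the supremum and the infimum of `J` over it
are within the modulus of continuity of `J` at `θ'`. -/

omit [NormedSpace ℝ E] in
theorem GrowthG1.exists_norm_le {Θ : Set E} {I : E → E → ENNReal} (hG1 : GrowthG1 Θ I)
    (r C : ℝ) : ∃ K, ∀ θ ∈ Θ, ‖θ‖ ≤ C → ∀ ϑ ∈ sublevelSet I θ r, ‖ϑ‖ ≤ K := by
  by_contra! h
  choose θs hθs hθC ϑs hϑs hlt using fun n : ℕ => h n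
  have hI := hG1 θs ϑs hθs ⟨C, hθC⟩
    (tendsto_atTop_mono (fun n => (hlt n).le) tendsto_natCast_atTop_atTop)
  obtain ⟨n, hn⟩ := (hI.eventually (eventually_gt_nhds ENNReal.ofReal_lt_top)).exists
  exact (hϑs n).not_gt hn

omit [NormedSpace ℝ E] in
theorem GrowthG2.exists_norm_le_mul {Θ : Set E} {I : E → E → ENNReal} (hG2 : GrowthG2 Θ I)
    (r : ℝ) : ∃ C K, ∀ θ ∈ Θ, C ≤ ‖θ‖ → ∀ ϑ ∈ sublevelSet I θ r, ‖ϑ‖ ≤ K * ‖θ‖ := by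
  by_contra! h
  choose θs hθs hθC ϑs hϑs hlt using fun n : ℕ => h (n + 1) n
  have hθ : Tendsto (fun n => ‖θs n‖) atTop atTop :=
    tendsto_atTop_mono (fun n => (hθC n).trans' (le_add_of_nonneg_right zero_le_one))
      tendsto_natCast_atTop_atTop
  have hratio : Tendsto (fun n => ‖ϑs n‖ / ‖θs n‖) atTop atTop :=
    tendsto_atTop_mono (fun n => ((lt_div_iff₀ (by linarith [hθC n, n.cast_nonneg' (α := ℝ)])).2
      (hlt n)).le) tendsto_natCast_atTop_atTop
  have hlimsup : limsup (fun n => I (θs n) (ϑs n)) atTop ≤ ENNReal.ofReal r :=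
    limsup_le_of_le (by isBoundedDefault) (Eventually.of_forall hϑs)
  rw [hG2 θs ϑs hθs hθ hratio, top_le_iff] at hlimsup
  exact ENNReal.ofReal_ne_top hlimsup

omit [NormedSpace ℝ E] in
theorem exists_norm_le_mul_norm_add_one {Θ : Set E} {I : E → E → ENNReal}
    (hG1 : GrowthG1 Θ I) (hG2 : GrowthG2 Θ I) (r : ℝ) :
    ∃ K, 0 ≤ K ∧ ∀ θ ∈ Θ, ∀ ϑ ∈ sublevelSet I θ r, ‖ϑ‖ ≤ K * (‖θ‖ + 1) := by
  obtain ⟨C, K₂, hlarge⟩ := hG2.exists_norm_le_mul r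
  obtain ⟨K₁, hsmall⟩ := hG1.exists_norm_le r C
  set K := max (max K₁ K₂) 0
  have hK₁ : K₁ ≤ K := (le_max_left _ _).trans (le_max_left _ _)
  have hK₂ : K₂ ≤ K := (le_max_right _ _).trans (le_max_left _ _)
  refine ⟨K, le_max_right _ _, fun θ hθ ϑ hϑ => ?_⟩
  have hθ0 := norm_nonneg θ
  rcases le_total C ‖θ‖ with hC | hC
  · calc ‖ϑ‖ ≤ K₂ * ‖θ‖ := hlarge θ hθ hC ϑ hϑ
      _ ≤ K * (‖θ‖ + 1) := by nlinarith [le_max_right (max K₁ K₂) 0]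
  · calc ‖ϑ‖ ≤ K₁ := hsmall θ hθ hC ϑ hϑ
      _ ≤ K * (‖θ‖ + 1) := by nlinarith [le_max_right (max K₁ K₂) 0]

theorem norm_sub_lt_of_norm_smul_sub_sub_lt {K R a δ : ℝ} {θ θ' ϑ : E} (hK : 0 ≤ K)
    (ha : K < a) (hθ' : ‖θ'‖ ≤ R) (hϑ : ‖ϑ‖ ≤ K * (‖θ‖ + 1)) (h : ‖a • (θ' - θ) - ϑ‖ < δ) :
    ‖θ' - θ‖ < (K * (R + 1) + δ) / (a - K) := by
  rw [lt_div_iff₀ (sub_pos.2 ha)]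
  have hsmul : a * ‖θ' - θ‖ ≤ ‖ϑ‖ + ‖a • (θ' - θ) - ϑ‖ := by
    have := norm_le_insert' (a • (θ' - θ)) ϑ
    rwa [norm_smul, Real.norm_of_nonneg (hK.trans ha.le)] at this
  have hθ : K * ‖θ‖ ≤ K * (R + ‖θ' - θ‖) :=
    mul_le_mul_of_nonneg_left ((norm_le_insert' θ θ').trans (by rw [norm_sub_rev]; linarith)) hK
  nlinarith

/-- `upperCB` and `lowerCB` at `(T, θ')` are, by definition, the `sSup` and `sInf` of `J` over
`confidenceRegion Θ I r δ (a T) θ'`. -/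
def confidenceRegion (Θ : Set E) (I : E → E → ENNReal) (r δ c : ℝ) (θ' : E) : Set E :=
  {θ : E | θ ∈ Θ ∧ c • (θ' - θ) ∈ fatSublevel I θ r δ}

theorem self_mem_confidenceRegion {Θ : Set E} {I : E → E → ENNReal} {r δ c : ℝ} {θ' : E}
    (hθ' : θ' ∈ Θ) (hI0 : I θ' 0 = 0) (hδ : 0 < δ) : θ' ∈ confidenceRegion Θ I r δ c θ' := by
  refine ⟨hθ', ?_⟩
  rw [fatSublevel, if_neg hδ.ne', sub_self, smul_zero]
  exact mem_biUnion (x := 0) (by simp [sublevelSet, hI0]) (mem_ball_self hδ)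

theorem eventually_confidenceRegion_subset_ball {Θ : Set E} {I : E → E → ENNReal}
    {a : ℝ → ℝ} {r δ ρ : ℝ} {Θ0 : Set E} (hG1 : GrowthG1 Θ I) (hG2 : GrowthG2 Θ I)
    (hatop : Tendsto a atTop atTop) (hδ : 0 < δ) (hΘ0 : Bornology.IsBounded Θ0) (hρ : 0 < ρ) :
    ∀ᶠ T in atTop, ∀ θ' ∈ Θ0, confidenceRegion Θ I r δ (a T) θ' ⊆ ball θ' ρ := by
  obtain ⟨K, hK, hbound⟩ := exists_norm_le_mul_norm_add_one hG1 hG2 r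
  obtain ⟨R, hR⟩ := isBounded_iff_forall_norm_le.1 hΘ0
  have hradius : Tendsto (fun T => (K * (R + 1) + δ) / (a T - K)) atTop (𝓝 0) :=
    tendsto_const_nhds.div_atTop (by simpa only [sub_eq_add_neg]
      using tendsto_atTop_add_const_right _ (-K) hatop)
  filter_upwards [hatop.eventually_gt_atTop K, hradius.eventually (gt_mem_nhds hρ)]
    with T haT hsmall θ' hθ' θ ⟨hθ, hmem⟩
  rw [fatSublevel, if_neg hδ.ne'] at hmem
  obtain ⟨ϑ, hϑ, hclose⟩ := mem_iUnion₂.1 hmem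
  rw [mem_ball, dist_eq_norm] at hclose
  rw [mem_ball', dist_eq_norm]
  exact (norm_sub_lt_of_norm_smul_sub_sub_lt hK haT (hR θ' hθ') (hbound θ hθ ϑ hϑ) hclose).trans
    hsmall

theorem eventually_image_confidenceRegion_subset_closedBall {Θ : Set E} {I : E → E → ENNReal}
    {J : E → ℝ} {a : ℝ → ℝ} {r δ ε : ℝ} {Θ0 : Set E} (hG1 : GrowthG1 Θ I) (hG2 : GrowthG2 Θ I)
    (hatop : Tendsto a atTop atTop)
    (hJ : ∀ a0 > (0 : ℝ), ∀ θ0 ∈ Θ, UniformContinuousOn J (closedBall θ0 a0 ∩ Θ))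
    (hδ : 0 < δ) (hΘ0Θ : Θ0 ⊆ Θ) (hΘ0 : Bornology.IsBounded Θ0) (hε : 0 < ε) :
    ∀ᶠ T in atTop, ∀ θ' ∈ Θ0, J '' confidenceRegion Θ I r δ (a T) θ' ⊆ closedBall (J θ') ε := by
  rcases Θ0.eq_empty_or_nonempty with rfl | ⟨θ0, hθ0⟩
  · simp
  obtain ⟨R, hR⟩ := hΘ0.subset_closedBall θ0
  have hR0 : 0 ≤ R := by simpa using hR hθ0
  obtain ⟨η, hη, hJη⟩ := Metric.uniformContinuousOn_iff.1
    (hJ (R + 1) (by linarith) θ0 (hΘ0Θ hθ0)) ε hε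
  filter_upwards [eventually_confidenceRegion_subset_ball hG1 hG2 hatop hδ hΘ0
    (lt_min hη one_pos)] with T hT θ' hθ'
  rintro _ ⟨θ, hθ, rfl⟩
  have hθθ' : dist θ θ' < min η 1 := hT θ' hθ' hθ
  have hθ'R : dist θ' θ0 ≤ R := hR hθ'
  have hθR : dist θ θ0 ≤ R + 1 := by
    linarith [dist_triangle θ θ' θ0, min_le_right η 1]
  exact (hJη θ ⟨hθR, hθ.1⟩ θ' ⟨by rw [mem_closedBall]; linarith, hΘ0Θ hθ'⟩
    (hθθ'.trans_le (min_le_left _ _))).le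

theorem csSup_mem_closedBall {S : Set ℝ} {x ε : ℝ} (hx : x ∈ S) (hS : S ⊆ closedBall x ε) :
    sSup S ∈ closedBall x ε :=
  closure_minimal hS isClosed_closedBall
    (csSup_mem_closure ⟨x, hx⟩ (isBounded_closedBall.subset hS).bddAbove)

theorem csInf_mem_closedBall {S : Set ℝ} {x ε : ℝ} (hx : x ∈ S) (hS : S ⊆ closedBall x ε) :
    sInf S ∈ closedBall x ε :=
  closure_minimal hS isClosed_closedBall
    (csInf_mem_closure ⟨x, hx⟩ (isBounded_closedBall.subset hS).bddBelow)

theorem TendstoUniformlyOn.tendsto_iSup_abs_sub {α β : Type*} {F : β → α → ℝ} {f : α → ℝ}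
    {l : Filter β} {s : Set α} (h : TendstoUniformlyOn F f l s) :
    Tendsto (fun n => ⨆ x ∈ s, |F n x - f x|) l (𝓝 0) := by
  rw [Metric.tendsto_nhds]
  intro ε hε
  filter_upwards [Metric.tendstoUniformlyOn_iff.1 h (ε / 2) (half_pos hε)] with n hn
  rw [Real.dist_0_eq_abs, abs_of_nonneg (Real.iSup_nonneg fun x =>
    Real.iSup_nonneg fun _ => abs_nonneg _)]
  refine lt_of_le_of_lt (Real.iSup_le (fun x => Real.iSup_le (fun hx => ?_) ?_) ?_)
    (half_lt_self hε)
  · rw [← Real.dist_eq, dist_comm]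
    exact (hn x hx).le
  all_goals positivity

section

variable {Θ Θ0 : Set E} {I : E → E → ENNReal} {J : E → ℝ} {a : ℝ → ℝ} {r δ : ℝ}

theorem tendstoUniformlyOn_upperCB (hG1 : GrowthG1 Θ I) (hG2 : GrowthG2 Θ I)
    (hatop : Tendsto a atTop atTop) (hI0 : ∀ θ ∈ Θ, I θ 0 = 0)
    (hJ : ∀ a0 > (0 : ℝ), ∀ θ0 ∈ Θ, UniformContinuousOn J (closedBall θ0 a0 ∩ Θ))
    (hδ : 0 < δ) (hΘ0Θ : Θ0 ⊆ Θ) (hΘ0 : Bornology.IsBounded Θ0) :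
    TendstoUniformlyOn (upperCB Θ I J r δ a) J atTop Θ0 := by
  refine Metric.tendstoUniformlyOn_iff.2 fun ε hε => ?_
  filter_upwards [eventually_image_confidenceRegion_subset_closedBall hG1 hG2 hatop hJ hδ hΘ0Θ
    hΘ0 (half_pos hε)] with T hT θ' hθ'
  rw [dist_comm]
  exact (csSup_mem_closedBall (mem_image_of_mem J (self_mem_confidenceRegion (hΘ0Θ hθ')
    (hI0 θ' (hΘ0Θ hθ')) hδ)) (hT θ' hθ')).trans_lt (half_lt_self hε)

theorem tendstoUniformlyOn_lowerCB (hG1 : GrowthG1 Θ I) (hG2 : GrowthG2 Θ I)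
    (hatop : Tendsto a atTop atTop) (hI0 : ∀ θ ∈ Θ, I θ 0 = 0)
    (hJ : ∀ a0 > (0 : ℝ), ∀ θ0 ∈ Θ, UniformContinuousOn J (closedBall θ0 a0 ∩ Θ))
    (hδ : 0 < δ) (hΘ0Θ : Θ0 ⊆ Θ) (hΘ0 : Bornology.IsBounded Θ0) :
    TendstoUniformlyOn (lowerCB Θ I J r δ a) J atTop Θ0 := by
  refine Metric.tendstoUniformlyOn_iff.2 fun ε hε => ?_
  filter_upwards [eventually_image_confidenceRegion_subset_closedBall hG1 hG2 hatop hJ hδ hΘ0Θ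
    hΘ0 (half_pos hε)] with T hT θ' hθ'
  rw [dist_comm]
  exact (csInf_mem_closedBall (mem_image_of_mem J (self_mem_confidenceRegion (hΘ0Θ hθ')
    (hI0 θ' (hΘ0Θ hθ')) hδ)) (hT θ' hθ')).trans_lt (half_lt_self hε)

end

theorem stmt11_general (Θ : Set E) (I : E → E → ENNReal) (J : E → ℝ)
    (a : ℝ → ℝ) (hatop : Tendsto a atTop atTop)
    (hG1 : GrowthG1 Θ I) (hG2 : GrowthG2 Θ I)
    (hI0 : ∀ θ ∈ Θ, I θ 0 = 0)
    (hJ : ∀ a0 > (0 : ℝ), ∀ θ0 ∈ Θ, UniformContinuousOn J (Metric.closedBall θ0 a0 ∩ Θ))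
    (r δ : ℝ) (hδ : 0 < δ) :
    ∀ Θ0 : Set E, Θ0 ⊆ Θ → IsCompact Θ0 →
      Tendsto (fun T => ⨆ θ' ∈ Θ0, |upperCB Θ I J r δ a T θ' - J θ'|) atTop (nhds 0) ∧
      Tendsto (fun T => ⨆ θ' ∈ Θ0, |lowerCB Θ I J r δ a T θ' - J θ'|) atTop (nhds 0) :=
  fun _ hΘ0Θ hΘ0 =>
    ⟨(tendstoUniformlyOn_upperCB hG1 hG2 hatop hI0 hJ hδ hΘ0Θ hΘ0.isBounded).tendsto_iSup_abs_sub,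
      (tendstoUniformlyOn_lowerCB hG1 hG2 hatop hI0 hJ hδ hΘ0Θ hΘ0.isBounded).tendsto_iSup_abs_sub⟩

/-- uniform convergence on compact sets: under (G1), (G2), `I_θ(0) = 0`
and uniform continuity of `J` on bounded subsets of `Θ`, for every `r > 0` and `δ > 0`,
`J̄^δ_{T,r} → J` and `J̲^δ_{T,r} → J` uniformly on compact subsets of `Θ`. -/
theorem stmt11 (Θ : Set E) (hΘ : Θ.Nonempty) (I : E → E → ENNReal) (J : E → ℝ)
    (a : ℝ → ℝ) (hapos : ∀ T > 0, 0 < a T) (hatop : Tendsto a atTop atTop)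
    (hG1 : GrowthG1 Θ I) (hG2 : GrowthG2 Θ I)
    (hI0 : ∀ θ ∈ Θ, I θ 0 = 0)
    (hJ : ∀ a0 > (0 : ℝ), ∀ θ0 ∈ Θ, UniformContinuousOn J (Metric.closedBall θ0 a0 ∩ Θ))
    (r δ : ℝ) (hr : 0 < r) (hδ : 0 < δ) :
    ∀ Θ0 : Set E, Θ0 ⊆ Θ → IsCompact Θ0 →
      Tendsto (fun T => ⨆ θ' ∈ Θ0, |upperCB Θ I J r δ a T θ' - J θ'|) atTop (nhds 0) ∧
      Tendsto (fun T => ⨆ θ' ∈ Θ0, |lowerCB Θ I J r δ a T θ' - J θ'|) atTop (nhds 0) :=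
  stmt11_general Θ I J a hatop hG1 hG2 hI0 hJ r δ hδ
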